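/- arXiv:1007.1082 — 3 statements merged into one kernel-verified Lean document; each statement's English description precedes it below -/
import Mathlib

section
/- Let μ be a doubling measure on ℂ and for each z ∈ ℂ let ρ(z) > 0 be a radius with μ(D(z,ρ(z))) = 1. Then for every r > 0 there exists c > 0 depending only on r and the doubling constant of μ such that c⁻¹ρ(ζ) ≤ ρ(z) ≤ c·ρ(ζ) whenever ζ ∈ D(z, r·ρ(z)). -/
open MeasureTheory Metric
open scoped ENNReal NNReal

/-- `μ` is doubling with constant `C`. -/
def DoublingWith (C : ℝ≥0) (μ : MeasureTheory.Measure ℂ) : Prop :=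
  ∀ z : ℂ, ∀ r : ℝ, 0 < r → μ (ball z (2 * r)) ≤ (C : ℝ≥0∞) * μ (ball z r)

/-!
Doubling alone bounds `μ(D(ζ, ρ(z)))` between `C⁻ᵏ` and `Cᵏ` when `ζ ∈ D(z, rρ(z))` and
`r + 1 < 2ᵏ`. In `ℂ` a doubling measure is also reverse doubling: the disc `D(x, 2s)` contains,
besides `D(x, s)`, a disjoint disc `D(y, s/2)` whose eightfold dilate covers `D(x, s)`. Hence the
measure of concentric discs grows at least like `((C³ + 1)/C³)ᵐ` when the radius is multiplied
by `2ᵐ`, so two concentric discs of comparable measure (here `D(ζ, ρ(z))` and `D(ζ, ρ(ζ))`) have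
radii within a factor `2ᵐ` of each other, with `m` depending only on `C` and `k`.
-/

lemma NNReal.exists_mul_pow_lt_add_one_pow (A D : ℝ≥0) : ∃ m : ℕ, A * D ^ m < (D + 1) ^ m := by
  obtain ⟨m, hm⟩ := NNReal.exists_pow_lt_of_lt_one (a := (A + 1)⁻¹) (by positivity)
    ((div_lt_one (by positivity : (0 : ℝ≥0) < D + 1)).2 (lt_add_one D))
  refine ⟨m, ?_⟩
  have hD : (0 : ℝ≥0) < (D + 1) ^ m := by positivity
  rw [div_pow, div_lt_iff₀ hD, ← div_eq_inv_mul, lt_div_iff₀ (by positivity)] at hm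
  calc A * D ^ m ≤ (A + 1) * D ^ m := by gcongr; exact le_self_add
    _ = D ^ m * (A + 1) := mul_comm _ _
    _ < (D + 1) ^ m := hm

lemma ball_subset_ball_mul_of_dist_lt {X : Type*} [PseudoMetricSpace X] {x y : X} {r R t : ℝ}
    (h : dist x y < r * t) (hR : r + 1 ≤ R) (ht : 0 ≤ t) : ball x t ⊆ ball y (R * t) :=
  ball_subset_ball' (by nlinarith)

namespace DoublingWith

variable {C : ℝ≥0} {μ : Measure ℂ}

lemma measure_ball_two_pow_mul_le (hD : DoublingWith C μ) (x : ℂ) {s : ℝ} (hs : 0 < s)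
    (n : ℕ) : μ (ball x (2 ^ n * s)) ≤ (C : ℝ≥0∞) ^ n * μ (ball x s) := by
  induction n with
  | zero => simp
  | succ n ih =>
    calc μ (ball x (2 ^ (n + 1) * s)) = μ (ball x (2 * (2 ^ n * s))) := by ring_nf
      _ ≤ C * μ (ball x (2 ^ n * s)) := hD x _ (by positivity)
      _ ≤ C * (C ^ n * μ (ball x s)) := by gcongr
      _ = C ^ (n + 1) * μ (ball x s) := by ring

lemma measure_ball_le_of_dist_lt (hD : DoublingWith C μ) {x y : ℂ} {r t : ℝ} {k : ℕ}
    (h : dist x y < r * t) (hk : r + 1 ≤ 2 ^ k) (ht : 0 < t) :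
    μ (ball x t) ≤ (C : ℝ≥0∞) ^ k * μ (ball y t) :=
  (measure_mono (ball_subset_ball_mul_of_dist_lt h hk ht.le)).trans
    (hD.measure_ball_two_pow_mul_le y ht k)

lemma add_one_mul_measure_ball_le (hD : DoublingWith C μ) (x : ℂ) {s : ℝ} (hs : 0 < s) :
    ((C : ℝ≥0∞) ^ 3 + 1) * μ (ball x s) ≤ (C : ℝ≥0∞) ^ 3 * μ (ball x (2 * s)) := by
  set y : ℂ := x + ((3 * s / 2 : ℝ) : ℂ)
  have hxy : dist x y = 3 * s / 2 := by
    rw [dist_comm, dist_eq_norm, add_sub_cancel_left, Complex.norm_real, Real.norm_of_nonneg]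
    positivity
  have hcover : μ (ball x s) ≤ C ^ 3 * μ (ball y (s / 2)) :=
    (measure_mono (ball_subset_ball' (by rw [hxy]; linarith))).trans
      (hD.measure_ball_two_pow_mul_le y (half_pos hs) 3)
  have hdisj : μ (ball x s) + μ (ball y (s / 2)) ≤ μ (ball x (2 * s)) := by
    rw [← measure_union (ball_disjoint_ball (by rw [hxy]; linarith)) measurableSet_ball]
    exact measure_mono (Set.union_subset (ball_subset_ball (by linarith))
      (ball_subset_ball' (by rw [dist_comm, hxy]; linarith)))
  calc ((C : ℝ≥0∞) ^ 3 + 1) * μ (ball x s) = C ^ 3 * μ (ball x s) + μ (ball x s) := by ring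
    _ ≤ C ^ 3 * μ (ball x s) + C ^ 3 * μ (ball y (s / 2)) := by gcongr
    _ = C ^ 3 * (μ (ball x s) + μ (ball y (s / 2))) := by ring
    _ ≤ C ^ 3 * μ (ball x (2 * s)) := by gcongr

lemma add_one_pow_mul_measure_ball_le (hD : DoublingWith C μ) (x : ℂ) {s : ℝ} (hs : 0 < s)
    (m : ℕ) : ((C : ℝ≥0∞) ^ 3 + 1) ^ m * μ (ball x s) ≤
      ((C : ℝ≥0∞) ^ 3) ^ m * μ (ball x (2 ^ m * s)) := by
  induction m with
  | zero => simp
  | succ m ih =>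
    calc ((C : ℝ≥0∞) ^ 3 + 1) ^ (m + 1) * μ (ball x s)
        = (C ^ 3 + 1) * ((C ^ 3 + 1) ^ m * μ (ball x s)) := by ring
      _ ≤ (C ^ 3 + 1) * ((C ^ 3) ^ m * μ (ball x (2 ^ m * s))) := by gcongr
      _ = (C ^ 3) ^ m * ((C ^ 3 + 1) * μ (ball x (2 ^ m * s))) := by ring
      _ ≤ (C ^ 3) ^ m * (C ^ 3 * μ (ball x (2 * (2 ^ m * s)))) := by
        exact mul_le_mul_right (hD.add_one_mul_measure_ball_le x (by positivity)) _
      _ = (C ^ 3) ^ (m + 1) * μ (ball x (2 ^ (m + 1) * s)) := by ring_nf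

lemma lt_two_pow_mul_of_measure_ball_le (hD : DoublingWith C μ) {x : ℂ} {s t : ℝ} (hs : 0 < s)
    {A : ℝ≥0∞} {m : ℕ} (hA : A * ((C : ℝ≥0∞) ^ 3) ^ m < ((C : ℝ≥0∞) ^ 3 + 1) ^ m)
    (hts : μ (ball x t) ≤ A * μ (ball x s)) (hpos : μ (ball x s) ≠ 0) (hfin : μ (ball x s) ≠ ∞) :
    t < 2 ^ m * s := by
  by_contra! hle
  refine (ENNReal.mul_lt_mul_left hpos hfin hA).not_ge ?_
  calc ((C : ℝ≥0∞) ^ 3 + 1) ^ m * μ (ball x s)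
      ≤ (C ^ 3) ^ m * μ (ball x (2 ^ m * s)) := hD.add_one_pow_mul_measure_ball_le x hs m
    _ ≤ (C ^ 3) ^ m * μ (ball x t) := by gcongr
    _ ≤ (C ^ 3) ^ m * (A * μ (ball x s)) := by gcongr
    _ = A * (C ^ 3) ^ m * μ (ball x s) := by ring

end DoublingWith

theorem stmt1_general (C : ℝ≥0) (r : ℝ) :
    ∃ c : ℝ, 0 < c ∧
      ∀ (μ : MeasureTheory.Measure ℂ) (ρ : ℂ → ℝ), DoublingWith C μ →
        (∀ z, 0 < ρ z) → (∀ z, μ (ball z (ρ z)) = 1) →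
        ∀ z ζ : ℂ, ζ ∈ ball z (r * ρ z) →
          c⁻¹ * ρ ζ ≤ ρ z ∧ ρ z ≤ c * ρ ζ := by
  obtain ⟨k, hk⟩ := pow_unbounded_of_one_lt (r + 1) one_lt_two
  obtain ⟨m, hm⟩ := NNReal.exists_mul_pow_lt_add_one_pow (C ^ k) (C ^ 3)
  have hA : (C : ℝ≥0∞) ^ k * ((C : ℝ≥0∞) ^ 3) ^ m < ((C : ℝ≥0∞) ^ 3 + 1) ^ m := by
    exact_mod_cast hm
  refine ⟨2 ^ m, by positivity, fun μ ρ hD hρ hρ1 z ζ hζ => ?_⟩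
  have hζz : dist ζ z < r * ρ z := hζ
  have near : μ (ball ζ (ρ z)) ≤ C ^ k := by
    simpa [hρ1 z] using hD.measure_ball_le_of_dist_lt hζz hk.le (hρ z)
  have far : 1 ≤ (C : ℝ≥0∞) ^ k * μ (ball ζ (ρ z)) :=
    hρ1 z ▸ hD.measure_ball_le_of_dist_lt (dist_comm ζ z ▸ hζz) hk.le (hρ z)
  have hpos : μ (ball ζ (ρ z)) ≠ 0 := fun h => by simp [h] at far
  have hfin : μ (ball ζ (ρ z)) ≠ ∞ := ne_top_of_le_ne_top (by simp) near
  constructor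
  · rw [inv_mul_le_iff₀ (by positivity)]
    exact (hD.lt_two_pow_mul_of_measure_ball_le (hρ z) hA (by rwa [hρ1 ζ]) hpos hfin).le
  · exact (hD.lt_two_pow_mul_of_measure_ball_le (hρ ζ) hA (by rwa [hρ1 ζ, mul_one])
      (by simp [hρ1]) (by simp [hρ1])).le

/-- For a doubling measure `μ` on `ℂ` with `ρ(z)` the radius for which `μ(D(z,ρ(z))) = 1`:
for every `r > 0` there is `c > 0`, depending only on `r` and the doubling constant, such that
`c⁻¹ ρ(ζ) ≤ ρ(z) ≤ c ρ(ζ)` whenever `ζ ∈ D(z, rρ(z))`. -/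
theorem stmt1 (C : ℝ≥0) (r : ℝ) (hr : 0 < r) :
    ∃ c : ℝ, 0 < c ∧
      ∀ (μ : MeasureTheory.Measure ℂ) (ρ : ℂ → ℝ), DoublingWith C μ →
        (∀ z, 0 < ρ z) → (∀ z, μ (ball z (ρ z)) = 1) →
        ∀ z ζ : ℂ, ζ ∈ ball z (r * ρ z) →
          c⁻¹ * ρ ζ ≤ ρ z ∧ ρ z ≤ c * ρ ζ :=
  stmt1_general C r
end

section
/- Let H be a separable Hilbert space of functions on ℂ with reproducing kernel K, orthonormal basis (eₙ), and suppose K(z,z) = Σₙ |eₙ(z)|². Let G : ℂ → [0,∞) be measurable and suppose the Toeplitz operator T_G f = P(G f) (P the orthogonal projection from L²(e^{−2φ}dm) onto H) is compact, positive, and self-adjoint with eigenvalues λₙ ≥ 0 and eigenbasis (eₙ). Then for p ≥ 2, Σₙ λₙ^{p/2} ≤ ∫_ℂ G(z)^{p/2} K(z,z) e^{−2φ(z)} dm(z). -/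
/-!
Each `|eₙ|² e^{−2φ} dm` is a probability measure and `λₙ` is the mean of `G` against it, so
Jensen's inequality for `t ↦ t^{p/2}` gives `λₙ^{p/2} ≤ ∫ G^{p/2} |eₙ|² e^{−2φ} dm`. Summing over
`n` and moving the sum inside the integral (the lower integral is superadditive) produces
`K(z,z) = Σₙ |eₙ(z)|²` inside the integral.
-/

open MeasureTheory
open scoped ENNReal NNReal

theorem ENNReal.rpow_lintegral_le_lintegral_rpow {α : Type*} [MeasurableSpace α] (μ : Measure α)
    [IsProbabilityMeasure μ] {f : α → ℝ≥0∞} (hf : AEMeasurable f μ) {q : ℝ} (hq : 1 ≤ q) :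
    (∫⁻ a, f a ∂μ) ^ q ≤ ∫⁻ a, f a ^ q ∂μ := by
  have hq0 : 0 < q := zero_lt_one.trans_le hq
  have h := eLpNorm'_le_eLpNorm'_of_exponent_le zero_lt_one hq μ hf.aestronglyMeasurable
  simp only [eLpNorm'_eq_lintegral_enorm, enorm_eq_self, ENNReal.rpow_one, div_one] at h
  calc (∫⁻ a, f a ∂μ) ^ q ≤ ((∫⁻ a, f a ^ q ∂μ) ^ (1 / q)) ^ q := by gcongr
    _ = ∫⁻ a, f a ^ q ∂μ := by
      rw [← ENNReal.rpow_mul, one_div_mul_cancel hq0.ne', ENNReal.rpow_one]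

theorem le_lintegral_finset_sum {α ι : Type*} [MeasurableSpace α] (μ : Measure α) (s : Finset ι)
    (f : ι → α → ℝ≥0∞) : ∑ i ∈ s, ∫⁻ a, f i a ∂μ ≤ ∫⁻ a, ∑ i ∈ s, f i a ∂μ := by
  classical
  induction s using Finset.induction_on with
  | empty => simp
  | insert i s his ih =>
    simp only [Finset.sum_insert his]
    exact (add_le_add le_rfl ih).trans (le_lintegral_add _ _)

theorem tsum_lintegral_le_lintegral_tsum {α ι : Type*} [MeasurableSpace α] (μ : Measure α)
    (f : ι → α → ℝ≥0∞) : ∑' i, ∫⁻ a, f i a ∂μ ≤ ∫⁻ a, ∑' i, f i a ∂μ := by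
  rw [ENNReal.tsum_eq_iSup_sum]
  exact iSup_le fun s => (le_lintegral_finset_sum μ s f).trans
    (lintegral_mono fun a => ENNReal.sum_le_tsum s)

section WeightedJensen

variable {α : Type*} [MeasurableSpace α] {μ : Measure α} {w : α → ℝ≥0} {g : α → ℝ≥0∞}

theorem isProbabilityMeasure_withDensity_coe (hw1 : ∫⁻ a, w a ∂μ = 1) :
    IsProbabilityMeasure (μ.withDensity fun a => (w a : ℝ≥0∞)) :=
  ⟨by rw [withDensity_apply _ MeasurableSet.univ, Measure.restrict_univ, hw1]⟩

theorem lintegral_withDensity_coe (hw : AEMeasurable w μ) (f : α → ℝ≥0∞) :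
    ∫⁻ a, f a ∂μ.withDensity (fun a => (w a : ℝ≥0∞)) = ∫⁻ a, w a * f a ∂μ :=
  lintegral_withDensity_eq_lintegral_mul_non_measurable₀ μ hw.coe_nnreal_ennreal
    (.of_forall fun _ => ENNReal.coe_lt_top) f

theorem rpow_lintegral_coe_mul_le (hw : AEMeasurable w μ) (hw1 : ∫⁻ a, w a ∂μ = 1)
    (hwg : AEMeasurable (fun a => (w a : ℝ≥0∞) * g a) μ) {q : ℝ} (hq : 1 ≤ q) :
    (∫⁻ a, w a * g a ∂μ) ^ q ≤ ∫⁻ a, w a * g a ^ q ∂μ := by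
  have := isProbabilityMeasure_withDensity_coe hw1
  simp only [← lintegral_withDensity_coe hw]
  exact ENNReal.rpow_lintegral_le_lintegral_rpow _
    ((aemeasurable_withDensity_ennreal_iff' hw).mpr hwg) hq

variable (μ) in
theorem ofReal_rpow_integral_mul_le {a G : α → ℝ} (ha : ∀ x, 0 ≤ a x) (ha1 : ∫ x, a x ∂μ = 1)
    (hG : ∀ x, 0 ≤ G x) (haG : Integrable (fun x => a x * G x) μ) {q : ℝ} (hq : 1 ≤ q) :
    ENNReal.ofReal ((∫ x, a x * G x ∂μ) ^ q) ≤
      ∫⁻ x, ENNReal.ofReal (a x) * ENNReal.ofReal (G x) ^ q ∂μ := by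
  have ha_int : Integrable a μ := .of_integral_ne_zero (by rw [ha1]; exact one_ne_zero)
  have hw1 : ∫⁻ x, ENNReal.ofReal (a x) ∂μ = 1 := by
    rw [← ofReal_integral_eq_lintegral_ofReal ha_int (.of_forall ha), ha1, ENNReal.ofReal_one]
  have haG_lintegral : ENNReal.ofReal (∫ x, a x * G x ∂μ) =
      ∫⁻ x, ENNReal.ofReal (a x) * ENNReal.ofReal (G x) ∂μ := by
    simp_rw [← ENNReal.ofReal_mul (ha _)]
    exact ofReal_integral_eq_lintegral_ofReal haG (.of_forall fun x => mul_nonneg (ha x) (hG x))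
  have hwg : AEMeasurable (fun x => ENNReal.ofReal (a x) * ENNReal.ofReal (G x)) μ := by
    simp_rw [← ENNReal.ofReal_mul (ha _)]
    exact haG.aemeasurable.ennreal_ofReal
  rw [← ENNReal.ofReal_rpow_of_nonneg (integral_nonneg fun x => mul_nonneg (ha x) (hG x))
    (by positivity), haG_lintegral]
  exact rpow_lintegral_coe_mul_le ha_int.aemeasurable.real_toNNReal hw1 hwg hq

end WeightedJensen

/-- Eigenvalue estimate for Toeplitz operators: if `(eₙ)` is an orthonormal basis of the
reproducing kernel Hilbert space `H ⊂ L²(e^{−2φ}dm)` (so each `|eₙ|²e^{−2φ}dm` is a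
probability measure and `K(z,z) = Σₙ |eₙ(z)|²`), `G ≥ 0`, and the Toeplitz operator `T_G`
has eigenvalues `λₙ = ∫ |eₙ|² G e^{−2φ} dm` with eigenbasis `(eₙ)`, then for `p ≥ 2`
`Σₙ λₙ^{p/2} ≤ ∫ G^{p/2} K(z,z) e^{−2φ} dm`. -/
theorem stmt6 (φ : ℂ → ℝ) (G : ℂ → ℝ) (hG : ∀ z, 0 ≤ G z)
    (e : ℕ → ℂ → ℂ) (lam : ℕ → ℝ) (p : ℝ) (hp : 2 ≤ p)
    (hprob : ∀ n, ∫ z : ℂ, ‖e n z‖ ^ 2 * Real.exp (-2 * φ z) = 1)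
    (hlamInt : ∀ n, Integrable fun z : ℂ => ‖e n z‖ ^ 2 * G z * Real.exp (-2 * φ z))
    (hlam : ∀ n, lam n = ∫ z : ℂ, ‖e n z‖ ^ 2 * G z * Real.exp (-2 * φ z)) :
    ∑' n, ENNReal.ofReal (lam n ^ (p / 2)) ≤
      ∫⁻ z : ℂ, ENNReal.ofReal (G z ^ (p / 2) * Real.exp (-2 * φ z)) *
        ∑' n, (‖e n z‖₊ : ℝ≥0∞) ^ 2 := by
  have hq : 1 ≤ p / 2 := by linarith
  have hJensen n : ENNReal.ofReal (lam n ^ (p / 2)) ≤ ∫⁻ z,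
      ENNReal.ofReal (‖e n z‖ ^ 2 * Real.exp (-2 * φ z)) * ENNReal.ofReal (G z) ^ (p / 2) := by
    simp_rw [hlam n, mul_right_comm _ (G _)] at hlamInt ⊢
    exact ofReal_rpow_integral_mul_le volume (fun z => by positivity) (hprob n) hG (hlamInt n) hq
  calc ∑' n, ENNReal.ofReal (lam n ^ (p / 2))
      ≤ ∑' n, ∫⁻ z, ENNReal.ofReal (‖e n z‖ ^ 2 * Real.exp (-2 * φ z)) *
          ENNReal.ofReal (G z) ^ (p / 2) := ENNReal.tsum_le_tsum hJensen
    _ ≤ ∫⁻ z, ∑' n, ENNReal.ofReal (‖e n z‖ ^ 2 * Real.exp (-2 * φ z)) *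
          ENNReal.ofReal (G z) ^ (p / 2) := tsum_lintegral_le_lintegral_tsum _ _
    _ = _ := by
      refine lintegral_congr fun z => ?_
      rw [← ENNReal.tsum_mul_left]
      congr with n
      rw [ENNReal.ofReal_rpow_of_nonneg (hG z) (by positivity), ENNReal.ofReal_mul (by positivity),
        ENNReal.ofReal_mul (Real.rpow_nonneg (hG z) _), ENNReal.ofReal_pow (norm_nonneg _),
        ofReal_norm, enorm_eq_nnnorm]
      ring
end

section
/- Let T be a compact operator from a reproducing kernel Hilbert space F ⊂ L²(ℂ, e^{−2φ}dm) (with kernel K, K(λ,λ) ∼ e^{2φ(λ)}/ρ(λ)²) to a Hilbert space H. For 2 ≤ p ≤ ∞ one has (∫_ℂ ‖T kλ‖^p dm(λ)/ρ(λ)²)^{1/p} ≲ ‖T‖_{S^p}, where kλ is the normalized reproducing kernel; the case p = ∞ reads sup_λ ‖T kλ‖ ≤ ‖T‖_{S^∞} = ‖T‖, and the general case follows by interpolation from p = 2 and p = ∞. -/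
open MeasureTheory
open scoped InnerProductSpace ENNReal NNReal

/-!
For a unit vector `x`, the weights `wₙ = |⟨eₙ, x⟩|²` have total mass at most `1` (Bessel), and
`‖T x‖² ≤ ∑ sₙ² wₙ`; Jensen's inequality for `t ↦ t^{p/2}` then gives
`‖T x‖^p ≤ ∑ sₙ^p wₙ`. For `x = k_λ` one has `wₙ / ρ(λ)² = |eₙ(λ)|² / (K(λ,λ) ρ(λ)²)
≤ c₁⁻¹ |eₙ(λ)|² e^{-2φ(λ)}`, and integrating in `λ` each `eₙ` contributes `‖eₙ‖² = 1`,
so the integral is at most `c₁⁻¹ ∑ sₙ^p`.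
-/

theorem Real.rpow_tsum_mul_le_tsum_mul_rpow {ι : Type*} {w a : ι → ℝ} (hw : ∀ i, 0 ≤ w i)
    (ha : ∀ i, 0 ≤ a i) (hw_le : ∀ s : Finset ι, ∑ i ∈ s, w i ≤ 1) {q : ℝ} (hq : 1 ≤ q)
    (hwa : Summable fun i => w i * a i ^ q) :
    (∑' i, w i * a i) ^ q ≤ ∑' i, w i * a i ^ q := by
  have hwa_nonneg (i : ι) : 0 ≤ w i * a i ^ q := mul_nonneg (hw i) (Real.rpow_nonneg (ha i) q)
  have hS : 0 ≤ ∑' i, w i * a i ^ q := tsum_nonneg hwa_nonneg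
  suffices h : ∑' i, w i * a i ≤ (∑' i, w i * a i ^ q) ^ q⁻¹ by
    calc (∑' i, w i * a i) ^ q ≤ ((∑' i, w i * a i ^ q) ^ q⁻¹) ^ q :=
          Real.rpow_le_rpow (tsum_nonneg fun i => mul_nonneg (hw i) (ha i)) h (by linarith)
      _ = ∑' i, w i * a i ^ q := Real.rpow_inv_rpow hS (by linarith)
  refine Real.tsum_le_of_sum_le (fun i => mul_nonneg (hw i) (ha i)) fun s => ?_
  calc ∑ i ∈ s, w i * a i
      ≤ (∑ i ∈ s, w i) ^ (1 - q⁻¹) * (∑ i ∈ s, w i * a i ^ q) ^ q⁻¹ :=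
        Real.inner_le_weight_mul_Lp_of_nonneg s hq w a hw ha
    _ ≤ 1 * (∑' i, w i * a i ^ q) ^ q⁻¹ := by
        have hs_nonneg : 0 ≤ ∑ i ∈ s, w i * a i ^ q := Finset.sum_nonneg fun i _ => hwa_nonneg i
        refine mul_le_mul ?_ ?_ (Real.rpow_nonneg hs_nonneg _) zero_le_one
        · exact Real.rpow_le_one (Finset.sum_nonneg fun i _ => hw i) (hw_le s)
            (sub_nonneg.2 (inv_le_one_of_one_le₀ hq))
        · exact Real.rpow_le_rpow hs_nonneg (hwa.sum_le_tsum s fun i _ => hwa_nonneg i)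
            (by positivity)
    _ = (∑' i, w i * a i ^ q) ^ q⁻¹ := one_mul _

theorem Orthonormal.norm_tsum_smul_sq_le {ι 𝕜 E : Type*} [RCLike 𝕜] [NormedAddCommGroup E]
    [InnerProductSpace 𝕜 E] {v : ι → E} (hv : Orthonormal 𝕜 v) {c : ι → 𝕜}
    (hc : Summable fun i => ‖c i‖ ^ 2) :
    ‖∑' i, c i • v i‖ ^ 2 ≤ ∑' i, ‖c i‖ ^ 2 := by
  by_cases hs : Summable fun i => c i • v i
  · refine le_of_tendsto (((continuous_norm.pow 2).tendsto _).comp hs.hasSum)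
      (Filter.Eventually.of_forall fun s => ?_)
    have hs_norm : ‖∑ i ∈ s, c i • v i‖ ^ 2 = ∑ i ∈ s, ‖c i‖ ^ 2 :=
      hv.orthogonalFamily.norm_sum c s
    exact hs_norm.trans_le (hc.sum_le_tsum s fun i _ => sq_nonneg _)
  · simpa [tsum_eq_zero_of_not_summable hs] using tsum_nonneg fun i => sq_nonneg ‖c i‖

section SingularValues

variable {ι F H : Type*} [NormedAddCommGroup F] [InnerProductSpace ℂ F]
  [NormedAddCommGroup H] [InnerProductSpace ℂ H] {s : ι → ℝ} {e : ι → F} {x : F}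

theorem Orthonormal.norm_inner_sq_le_one (he : Orthonormal ℂ e) (hx : ‖x‖ ≤ 1) (n : ι) :
    ‖⟪e n, x⟫_ℂ‖ ^ 2 ≤ 1 := by
  refine pow_le_one₀ (norm_nonneg _) ((norm_inner_le_norm _ _).trans ?_)
  rwa [he.norm_eq_one, one_mul]

theorem Orthonormal.summable_norm_inner_sq_mul_rpow (he : Orthonormal ℂ e)
    (hs : ∀ n, 0 ≤ s n) {p : ℝ} (hsp : Summable fun n => s n ^ p) (hx : ‖x‖ ≤ 1) :
    Summable fun n => ‖⟪e n, x⟫_ℂ‖ ^ 2 * s n ^ p :=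
  hsp.of_nonneg_of_le (fun n => mul_nonneg (sq_nonneg _) (Real.rpow_nonneg (hs n) p))
    fun n => mul_le_of_le_one_left (Real.rpow_nonneg (hs n) p) (he.norm_inner_sq_le_one hx n)

theorem Orthonormal.norm_tsum_singular_smul_rpow_le (he : Orthonormal ℂ e) {f : ι → H}
    (hf : Orthonormal ℂ f) (hs : ∀ n, 0 ≤ s n) {p : ℝ} (hp : 2 ≤ p)
    (hsp : Summable fun n => s n ^ p) (hx : ‖x‖ ≤ 1) :
    ‖∑' n, ((s n : ℂ) * ⟪e n, x⟫_ℂ) • f n‖ ^ p ≤ ∑' n, ‖⟪e n, x⟫_ℂ‖ ^ 2 * s n ^ p := by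
  have sq_rpow_half {t : ℝ} (ht : 0 ≤ t) : (t ^ 2) ^ (p / 2) = t ^ p := by
    rw [← Real.rpow_natCast, ← Real.rpow_mul ht]
    ring_nf
  have hcoeff (n : ι) : ‖(s n : ℂ) * ⟪e n, x⟫_ℂ‖ ^ 2 = ‖⟪e n, x⟫_ℂ‖ ^ 2 * s n ^ 2 := by
    rw [norm_mul, Complex.norm_real, Real.norm_of_nonneg (hs n), mul_pow, mul_comm]
  have hsq_le (n : ι) : s n ^ 2 ≤ 1 + s n ^ p := by
    rcases le_total (s n) 1 with h | h
    · have := Real.rpow_nonneg (hs n) p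
      nlinarith [pow_le_one₀ (hs n) h (n := 2)]
    · have := Real.rpow_le_rpow_of_exponent_le h hp
      norm_num at this
      linarith
  have hsummable : Summable fun n => ‖(s n : ℂ) * ⟪e n, x⟫_ℂ‖ ^ 2 := by
    refine ((he.inner_products_summable x).add
      (he.summable_norm_inner_sq_mul_rpow hs hsp hx)).of_nonneg_of_le (fun n => by positivity)
      fun n => ?_
    rw [hcoeff, ← mul_one_add]
    exact mul_le_mul_of_nonneg_left (hsq_le n) (by positivity)
  calc ‖∑' n, ((s n : ℂ) * ⟪e n, x⟫_ℂ) • f n‖ ^ p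
      = (‖∑' n, ((s n : ℂ) * ⟪e n, x⟫_ℂ) • f n‖ ^ 2) ^ (p / 2) :=
        (sq_rpow_half (norm_nonneg _)).symm
    _ ≤ (∑' n, ‖⟪e n, x⟫_ℂ‖ ^ 2 * s n ^ 2) ^ (p / 2) := by
        rw [← tsum_congr hcoeff]
        exact Real.rpow_le_rpow (by positivity) (hf.norm_tsum_smul_sq_le hsummable)
          (by linarith)
    _ ≤ ∑' n, ‖⟪e n, x⟫_ℂ‖ ^ 2 * (s n ^ 2) ^ (p / 2) :=
        Real.rpow_tsum_mul_le_tsum_mul_rpow (fun n => by positivity) (fun n => sq_nonneg _)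
          (fun t => (he.sum_inner_products_le x).trans (pow_le_one₀ (norm_nonneg x) hx))
          (by linarith) (by simpa only [sq_rpow_half (hs _)]
            using he.summable_norm_inner_sq_mul_rpow hs hsp hx)
    _ = ∑' n, ‖⟪e n, x⟫_ℂ‖ ^ 2 * s n ^ p := by simp only [sq_rpow_half (hs _)]

end SingularValues

theorem norm_inner_smul_inv_norm_sq_div_le {F : Type*} [NormedAddCommGroup F]
    [InnerProductSpace ℂ F] {K : F} {φ ρ c : ℝ} (hc : 0 < c) (hρ : 0 < ρ)
    (hK : c * (Real.exp (2 * φ) / ρ ^ 2) ≤ ‖K‖ ^ 2) (v : F) :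
    ‖⟪v, (‖K‖⁻¹ : ℝ) • K⟫_ℂ‖ ^ 2 / ρ ^ 2 ≤ c⁻¹ * (‖⟪K, v⟫_ℂ‖ ^ 2 * Real.exp (-2 * φ)) := by
  rw [← mul_div_assoc, div_le_iff₀ (by positivity)] at hK
  have hnormalize : ‖⟪v, (‖K‖⁻¹ : ℝ) • K⟫_ℂ‖ ^ 2 = ‖⟪K, v⟫_ℂ‖ ^ 2 / ‖K‖ ^ 2 := by
    rw [RCLike.real_smul_eq_coe_smul (K := ℂ), inner_smul_right, norm_mul, norm_inner_symm]
    simp [div_eq_inv_mul, mul_pow]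
  calc ‖⟪v, (‖K‖⁻¹ : ℝ) • K⟫_ℂ‖ ^ 2 / ρ ^ 2 = ‖⟪K, v⟫_ℂ‖ ^ 2 / (‖K‖ ^ 2 * ρ ^ 2) := by
        rw [hnormalize, div_div]
    _ ≤ ‖⟪K, v⟫_ℂ‖ ^ 2 / (c * Real.exp (2 * φ)) :=
        div_le_div_of_nonneg_left (sq_nonneg _) (by positivity) hK
    _ = c⁻¹ * (‖⟪K, v⟫_ℂ‖ ^ 2 * Real.exp (-2 * φ)) := by
        rw [neg_mul, Real.exp_neg]
        field_simp

theorem Orthonormal.ofReal_norm_tsum_singular_smul_rpow_div_le {ι F H : Type*}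
    [NormedAddCommGroup F] [InnerProductSpace ℂ F] [NormedAddCommGroup H]
    [InnerProductSpace ℂ H] {s : ι → ℝ} {e : ι → F} {f : ι → H} (he : Orthonormal ℂ e)
    (hf : Orthonormal ℂ f) (hs : ∀ n, 0 ≤ s n) {p : ℝ} (hp : 2 ≤ p)
    (hsp : Summable fun n => s n ^ p) {K : F} {φ ρ c : ℝ} (hc : 0 < c) (hρ : 0 < ρ)
    (hK : c * (Real.exp (2 * φ) / ρ ^ 2) ≤ ‖K‖ ^ 2) :
    ENNReal.ofReal (‖∑' n, ((s n : ℂ) * ⟪e n, (‖K‖⁻¹ : ℝ) • K⟫_ℂ) • f n‖ ^ p / ρ ^ 2) ≤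
      ∑' n, ENNReal.ofReal (c⁻¹ * s n ^ p) *
        ENNReal.ofReal (‖⟪K, e n⟫_ℂ‖ ^ 2 * Real.exp (-2 * φ)) := by
  set k : F := (‖K‖⁻¹ : ℝ) • K
  have hk : ‖k‖ ≤ 1 := mem_closedBall_zero_iff.1 (inv_norm_smul_mem_unitClosedBall K)
  have hsp_nonneg (n : ι) : 0 ≤ s n ^ p := Real.rpow_nonneg (hs n) p
  calc ENNReal.ofReal (‖∑' n, ((s n : ℂ) * ⟪e n, k⟫_ℂ) • f n‖ ^ p / ρ ^ 2)
      ≤ ENNReal.ofReal ((∑' n, ‖⟪e n, k⟫_ℂ‖ ^ 2 * s n ^ p) / ρ ^ 2) :=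
        ENNReal.ofReal_le_ofReal (div_le_div_of_nonneg_right
          (he.norm_tsum_singular_smul_rpow_le hf hs hp hsp hk) (by positivity))
    _ = ∑' n, ENNReal.ofReal (‖⟪e n, k⟫_ℂ‖ ^ 2 * s n ^ p / ρ ^ 2) := by
        rw [← tsum_div_const, ENNReal.ofReal_tsum_of_nonneg
          (fun n => div_nonneg (mul_nonneg (sq_nonneg _) (hsp_nonneg n)) (sq_nonneg _))
          ((he.summable_norm_inner_sq_mul_rpow hs hsp hk).div_const _)]
    _ ≤ ∑' n, ENNReal.ofReal (c⁻¹ * s n ^ p) *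
          ENNReal.ofReal (‖⟪K, e n⟫_ℂ‖ ^ 2 * Real.exp (-2 * φ)) := by
        refine ENNReal.tsum_le_tsum fun n => ?_
        rw [← ENNReal.ofReal_mul (mul_nonneg (inv_nonneg.2 hc.le) (hsp_nonneg n))]
        refine ENNReal.ofReal_le_ofReal ?_
        calc ‖⟪e n, k⟫_ℂ‖ ^ 2 * s n ^ p / ρ ^ 2 = ‖⟪e n, k⟫_ℂ‖ ^ 2 / ρ ^ 2 * s n ^ p :=
              mul_div_right_comm _ _ _
          _ ≤ c⁻¹ * (‖⟪K, e n⟫_ℂ‖ ^ 2 * Real.exp (-2 * φ)) * s n ^ p :=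
              mul_le_mul_of_nonneg_right
                (norm_inner_smul_inv_norm_sq_div_le hc hρ hK (e n)) (hsp_nonneg n)
          _ = c⁻¹ * s n ^ p * (‖⟪K, e n⟫_ℂ‖ ^ 2 * Real.exp (-2 * φ)) := by ring

theorem stmt19_general {F H : Type*}
    [NormedAddCommGroup F] [InnerProductSpace ℂ F]
    [NormedAddCommGroup H] [InnerProductSpace ℂ H]
    (c₁ c₂ : ℝ) (hc₁ : 0 < c₁) (p : ℝ) (hp : 2 ≤ p) :
    ∃ c : ℝ, 0 < c ∧
      ∀ (φ ρ : ℂ → ℝ) (Kf : ℂ → F) (ι : F →ₗ[ℂ] (ℂ → ℂ)),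
        (∀ z, 0 < ρ z) →
        (∀ (f : F) (z : ℂ), ι f z = ⟪Kf z, f⟫_ℂ) →
        (∀ f : F, (‖f‖ : ℝ) ^ 2 = ∫ z : ℂ, ‖ι f z‖ ^ 2 * Real.exp (-2 * φ z)) →
        (∀ l : ℂ, c₁ * (Real.exp (2 * φ l) / ρ l ^ 2) ≤ ‖Kf l‖ ^ 2 ∧
          ‖Kf l‖ ^ 2 ≤ c₂ * (Real.exp (2 * φ l) / ρ l ^ 2)) →
        ∀ (T : F →L[ℂ] H) (s : ℕ → ℝ) (e : ℕ → F) (f : ℕ → H),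
          Orthonormal ℂ e → Orthonormal ℂ f → (∀ n, 0 ≤ s n) →
          (∀ x : F, T x = ∑' n, ((s n : ℂ) * ⟪e n, x⟫_ℂ) • f n) →
          Summable (fun n => s n ^ p) →
          (∫⁻ l : ℂ, ENNReal.ofReal (‖T ((‖Kf l‖⁻¹ : ℝ) • Kf l)‖ ^ p / ρ l ^ 2) ≤
              ENNReal.ofReal (c * ∑' n, s n ^ p)) ∧
          (∀ l : ℂ, ‖T ((‖Kf l‖⁻¹ : ℝ) • Kf l)‖ ≤ ‖T‖) := by
  refine ⟨c₁⁻¹, inv_pos.2 hc₁, fun φ ρ Kf ι hρ hι hiso hK T s e f he hf hs hT hsp => ⟨?_, ?_⟩⟩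
  · have hint (n : ℕ) : Integrable fun z => ‖⟪Kf z, e n⟫_ℂ‖ ^ 2 * Real.exp (-2 * φ z) := by
      refine Integrable.of_integral_ne_zero ?_
      simp only [← hι, ← hiso, he.norm_eq_one]
      norm_num
    have hunit (n : ℕ) :
        ∫⁻ z, ENNReal.ofReal (‖⟪Kf z, e n⟫_ℂ‖ ^ 2 * Real.exp (-2 * φ z)) = 1 := by
      rw [← ofReal_integral_eq_lintegral_ofReal (hint n) (ae_of_all _ fun z => by positivity)]
      simp only [← hι, ← hiso, he.norm_eq_one]
      norm_num
    calc ∫⁻ l, ENNReal.ofReal (‖T ((‖Kf l‖⁻¹ : ℝ) • Kf l)‖ ^ p / ρ l ^ 2)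
        ≤ ∫⁻ l, ∑' n, ENNReal.ofReal (c₁⁻¹ * s n ^ p) *
            ENNReal.ofReal (‖⟪Kf l, e n⟫_ℂ‖ ^ 2 * Real.exp (-2 * φ l)) := lintegral_mono fun l =>
          hT _ ▸ he.ofReal_norm_tsum_singular_smul_rpow_div_le hf hs hp hsp hc₁ (hρ l) (hK l).1
      _ = ∑' n, ENNReal.ofReal (c₁⁻¹ * s n ^ p) := by
          rw [lintegral_tsum fun n => (hint n).aemeasurable.ennreal_ofReal.const_mul _]
          simp only [lintegral_const_mul' _ _ ENNReal.ofReal_ne_top, hunit, mul_one]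
      _ = ENNReal.ofReal (c₁⁻¹ * ∑' n, s n ^ p) := by
          rw [← tsum_mul_left, ENNReal.ofReal_tsum_of_nonneg
            (fun n => mul_nonneg (inv_nonneg.2 hc₁.le) (Real.rpow_nonneg (hs n) p))
            (hsp.mul_left _)]
  · exact fun l => (T.le_opNorm_of_le
      (mem_closedBall_zero_iff.1 (inv_norm_smul_mem_unitClosedBall (Kf l)))).trans_eq (mul_one _)

/-- Schatten kernel estimate: let `F` be a reproducing kernel Hilbert space of functions on
`ℂ`, isometrically contained in `L²(e^{−2φ}dm)` (realized by `ι`, reproducing vectors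
`Kf λ = K(·,λ)`), with `K(λ,λ) = ‖Kf λ‖² ∼ e^{2φ(λ)}/ρ(λ)²` (constants `c₁,c₂`). If the
compact operator `T : F → H` has singular value decomposition with singular values `(sₙ)`
`p`-summable, `2 ≤ p < ∞`, then `(∫ ‖T kλ‖^p dm(λ)/ρ(λ)²)^{1/p} ≲ ‖T‖_{S^p}`
(stated with `p`-th powers), with constant depending only on `c₁, c₂, p`; the `p = ∞` case
reads `sup_λ ‖T kλ‖ ≤ ‖T‖`. Here `kλ = Kf λ/‖Kf λ‖`. -/
theorem stmt19 {F H : Type*}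
    [NormedAddCommGroup F] [InnerProductSpace ℂ F] [CompleteSpace F]
    [NormedAddCommGroup H] [InnerProductSpace ℂ H] [CompleteSpace H]
    (c₁ c₂ : ℝ) (hc₁ : 0 < c₁) (hc₂ : 0 < c₂) (p : ℝ) (hp : 2 ≤ p) :
    ∃ c : ℝ, 0 < c ∧
      ∀ (φ ρ : ℂ → ℝ) (Kf : ℂ → F) (ι : F →ₗ[ℂ] (ℂ → ℂ)),
        (∀ z, 0 < ρ z) →
        (∀ (f : F) (z : ℂ), ι f z = ⟪Kf z, f⟫_ℂ) →
        (∀ f : F, (‖f‖ : ℝ) ^ 2 = ∫ z : ℂ, ‖ι f z‖ ^ 2 * Real.exp (-2 * φ z)) →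
        (∀ l : ℂ, c₁ * (Real.exp (2 * φ l) / ρ l ^ 2) ≤ ‖Kf l‖ ^ 2 ∧
          ‖Kf l‖ ^ 2 ≤ c₂ * (Real.exp (2 * φ l) / ρ l ^ 2)) →
        ∀ (T : F →L[ℂ] H) (s : ℕ → ℝ) (e : ℕ → F) (f : ℕ → H),
          Orthonormal ℂ e → Orthonormal ℂ f → (∀ n, 0 ≤ s n) →
          (∀ x : F, T x = ∑' n, ((s n : ℂ) * ⟪e n, x⟫_ℂ) • f n) →
          Summable (fun n => s n ^ p) →
          (∫⁻ l : ℂ, ENNReal.ofReal (‖T ((‖Kf l‖⁻¹ : ℝ) • Kf l)‖ ^ p / ρ l ^ 2) ≤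
              ENNReal.ofReal (c * ∑' n, s n ^ p)) ∧
          (∀ l : ℂ, ‖T ((‖Kf l‖⁻¹ : ℝ) • Kf l)‖ ≤ ‖T‖) :=
  stmt19_general c₁ c₂ hc₁ p hp
end
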